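/- For every finite connected simple graph G on n vertices with minimum degree at least δ, there exists a burning sequence of G of length at most ⌈√(24n/(δ+1))⌉. -/

import Mathlib

/-!
Let `s = ⌈√(24n/(δ+1))⌉` and `k = ⌊s/12⌋`. If some vertex is within distance `3k` of every
vertex, burning it alone takes `3k + 1 ≤ s` rounds. Otherwise every vertex `x` has a vertex at
distance `> 3k`; along a geodesic towards it, the closed neighbourhoods of the vertices at
distances `0, 3, …, 3k` from `x` are disjoint, so the ball of radius `3k + 1` around `x` has at
least `(δ+1)(k+1)` vertices. A maximal set `X` with pairwise distances `> 6k + 2` has pairwise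
disjoint such balls, so `|X| ≤ n/((δ+1)(k+1)) ≤ s²/(24(k+1))`, and every vertex lies within
distance `6k + 2` of `X`. Burning `X` first and then letting the fire spread for `6k + 2` rounds
takes `|X| + 6k + 2 ≤ s` rounds.
-/

/-- `a : Fin m → V` is a burning sequence of length `m` for `G`: the vertex activated
in round `i+1` is `a i`, and every vertex `v` must be within distance `m - (i+1)` of
some activator `a i`. -/
def IsBurningSeq {V : Type} (G : SimpleGraph V) (m : ℕ) (a : Fin m → V) : Prop :=
  ∀ v : V, ∃ i : Fin m, G.dist v (a i) ≤ m - (i.val + 1)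

open Finset

theorem Finset.card_mul_le_of_pairwiseDisjoint {ι α : Type*} {s : Finset ι} {t : ι → Finset α}
    {u : Finset α} {b : ℕ} (hdisj : (s : Set ι).PairwiseDisjoint t) (hsub : ∀ i ∈ s, t i ⊆ u)
    (hcard : ∀ i ∈ s, b ≤ #(t i)) : #s * b ≤ #u := by
  classical
  calc #s * b ≤ ∑ i ∈ s, #(t i) := by simpa using s.card_nsmul_le_sum _ b hcard
    _ = #(s.biUnion t) := (card_biUnion hdisj).symm
    _ ≤ #u := card_le_card (biUnion_subset.mpr hsub)

theorem Nat.le_mul_ceil_sqrt_div_sq {a b : ℕ} (hb : 0 < b) :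
    a ≤ b * ⌈Real.sqrt (a / b)⌉₊ ^ 2 := by
  have hsq : (a / b : ℝ) ≤ (⌈Real.sqrt (a / b)⌉₊ : ℝ) ^ 2 :=
    (Real.sqrt_le_iff.mp (Nat.le_ceil _)).2
  rw [div_le_iff₀ (by positivity)] at hsq
  exact_mod_cast hsq.trans_eq (mul_comm _ _)

theorem Nat.add_six_mul_div_twelve_add_two_le {s t : ℕ} (hs : 2 ≤ s)
    (ht : 24 * (s / 12 + 1) * t ≤ s ^ 2) : t + (6 * (s / 12) + 2) ≤ s := by
  have hlo : 12 * (s / 12) ≤ s := Nat.mul_div_le s 12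
  have hhi : s < 12 * (s / 12) + 12 := by omega
  generalize s / 12 = k at *
  by_contra! h
  -- `h` forces `120 (k + 1) ≤ (12 (k + 1) - s) ^ 2`, although `0 < 12 (k + 1) - s ≤ 12`.
  rcases Nat.eq_zero_or_pos k with rfl | hk
  · interval_cases s <;> omega
  · nlinarith

namespace SimpleGraph

variable {V : Type} (G : SimpleGraph V)

theorem exists_isBurningSeq_card_add [Nonempty V] (X : Finset V) (r : ℕ)
    (hX : ∀ v, ∃ x ∈ X, G.dist v x ≤ r) : ∃ a : Fin (#X + r) → V, IsBurningSeq G (#X + r) a := by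
  refine ⟨Fin.append (fun i => X.equivFin.symm i) (fun _ => Classical.arbitrary V), fun v => ?_⟩
  obtain ⟨x, hx, hvx⟩ := hX v
  refine ⟨Fin.castAdd r (X.equivFin ⟨x, hx⟩), ?_⟩
  simp only [Fin.append_left, Equiv.symm_apply_apply, Fin.val_castAdd]
  have := (X.equivFin ⟨x, hx⟩).isLt
  omega

variable [Fintype V]

theorem exists_separated_cover (d : ℕ) :
    ∃ X : Finset V, (X : Set V).Pairwise (fun x y => d < G.dist x y) ∧
      ∀ v, ∃ x ∈ X, G.dist v x ≤ d := by
  classical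
  obtain ⟨X, hXsep, hXmax⟩ := (univ.filter fun X : Finset V =>
    (X : Set V).Pairwise (fun x y => d < G.dist x y)).exists_maximal ⟨∅, by simp⟩
  simp only [mem_filter, mem_univ, true_and] at hXsep hXmax
  refine ⟨X, hXsep, fun v => ?_⟩
  by_contra! hfar
  have hv : v ∈ X := hXmax (by
    push_cast
    exact hXsep.insert fun x hx _ => ⟨hfar x hx, G.dist_comm ▸ hfar x hx⟩)
    (subset_insert v X) (mem_insert_self v X)
  simpa using hfar v hv

noncomputable def closedBall (x : V) (r : ℕ) : Finset V := {y | G.dist y x ≤ r}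

variable {G}

@[simp]
theorem mem_closedBall {x y : V} {r : ℕ} : y ∈ G.closedBall x r ↔ G.dist y x ≤ r := by
  simp [closedBall]

theorem degree_add_one_le_card_closedBall_one [DecidableRel G.Adj] (x : V) :
    G.degree x + 1 ≤ #(G.closedBall x 1) := by
  classical
  rw [← card_neighborFinset_eq_degree, ← card_insert_of_notMem (G.notMem_neighborFinset_self x)]
  refine card_le_card fun y hy => ?_
  rcases mem_insert.mp hy with rfl | hy
  · simp
  · simpa using (dist_eq_one_iff_adj.mpr (G.adj_symm ((mem_neighborFinset _ _ _).mp hy))).le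

theorem Connected.closedBall_subset_closedBall (hconn : G.Connected) {x y : V} {r s : ℕ}
    (h : r + G.dist x y ≤ s) : G.closedBall x r ⊆ G.closedBall y s := fun z hz => by
  simp only [mem_closedBall] at hz ⊢
  linarith [hconn.dist_triangle (u := z) (v := x) (w := y)]

theorem Connected.disjoint_closedBall (hconn : G.Connected) {x y : V} {r s : ℕ}
    (h : r + s < G.dist x y) : Disjoint (G.closedBall x r) (G.closedBall y s) := by
  refine Finset.disjoint_left.mpr fun z hx hy => ?_
  simp only [mem_closedBall] at hx hy
  linarith [hconn.dist_triangle (u := x) (v := z) (w := y), G.dist_comm (u := z) (v := x)]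

theorem Connected.card_mul_le_card_closedBall [DecidableRel G.Adj] (hconn : G.Connected)
    {δ k : ℕ} (hδ : δ ≤ G.minDegree) {x w : V} (hxw : 3 * k ≤ G.dist x w) :
    (δ + 1) * (k + 1) ≤ #(G.closedBall x (3 * k + 1)) := by
  obtain ⟨p, hp⟩ := hconn.exists_walk_length_eq_dist x w
  set u : ℕ → V := fun a => p.getVert (3 * a)
  have hxu (a : ℕ) : G.dist x (u a) ≤ 3 * a := (dist_le (p.take (3 * a))).trans (by simp)
  have huw (a : ℕ) : G.dist (u a) w ≤ G.dist x w - 3 * a :=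
    hp ▸ (dist_le (p.drop (3 * a))).trans (by simp)
  have hsep {a b : ℕ} (hab : a < b) (hb : b ≤ k) : 2 < G.dist (u a) (u b) := by
    have := hconn.dist_triangle (u := x) (v := u a) (w := w)
    have := hconn.dist_triangle (u := u a) (v := u b) (w := w)
    have := hxu a; have := huw b
    omega
  rw [mul_comm, ← card_range (k + 1)]
  refine card_mul_le_of_pairwiseDisjoint (s := range (k + 1)) (t := fun a => G.closedBall (u a) 1)
    ?_ ?_ ?_
  · intro a ha b hb hab
    rcases lt_or_gt_of_ne hab with h | h
    · exact hconn.disjoint_closedBall (hsep h (by simpa [Nat.lt_succ_iff] using hb))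
    · exact (hconn.disjoint_closedBall (hsep h (by simpa [Nat.lt_succ_iff] using ha))).symm
  · intro a ha
    refine hconn.closedBall_subset_closedBall ?_
    rw [G.dist_comm]
    have := hxu a
    simp only [mem_range] at ha
    omega
  · intro a _
    exact (Nat.add_le_add_right (hδ.trans (G.minDegree_le_degree _)) 1).trans
      (G.degree_add_one_le_card_closedBall_one _)

end SimpleGraph

open SimpleGraph in
/-- Every finite connected graph on `n` vertices with minimum degree at least `δ`
has a burning sequence of length at most `⌈√(24n/(δ+1))⌉`. -/
theorem burning_seq_of_min_degree {V : Type} [Fintype V] (G : SimpleGraph V)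
    [DecidableRel G.Adj] (hconn : G.Connected) (n δ : ℕ) (hn : Fintype.card V = n)
    (hδ : δ ≤ G.minDegree) :
    ∃ (m : ℕ) (a : Fin m → V), IsBurningSeq G m a ∧
      m ≤ ⌈Real.sqrt (24 * n / (δ + 1))⌉₊ := by
  have := hconn.nonempty
  set s := ⌈Real.sqrt (24 * n / (δ + 1))⌉₊
  set k := s / 12 with hk
  have hs : 24 * n ≤ (δ + 1) * s ^ 2 := by
    have := Nat.le_mul_ceil_sqrt_div_sq (a := 24 * n) (b := δ + 1) δ.succ_pos
    push_cast at this
    exact this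
  have hδn : δ + 1 ≤ n := hn ▸ hδ.trans_lt G.minDegree_lt_card
  have hs2 : 2 ≤ s := by
    by_contra! h
    have : s ^ 2 ≤ 1 := pow_le_one₀ (Nat.zero_le s) (by omega)
    nlinarith
  by_cases hecc : ∃ x, ∀ v, G.dist v x ≤ 3 * k
  · obtain ⟨x, hx⟩ := hecc
    obtain ⟨a, ha⟩ := G.exists_isBurningSeq_card_add {x} _ fun v => ⟨x, mem_singleton_self x, hx v⟩
    exact ⟨_, a, ha, by rw [card_singleton]; omega⟩
  push Not at hecc
  obtain ⟨X, hXsep, hXcov⟩ := G.exists_separated_cover (6 * k + 2)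
  have hXcard : #X * ((δ + 1) * (k + 1)) ≤ n := by
    refine hn ▸ card_mul_le_of_pairwiseDisjoint (t := fun x => G.closedBall x (3 * k + 1))
      (u := univ) (fun x hx y hy hxy => hconn.disjoint_closedBall ?_) (by simp) fun x _ => ?_
    · have := hXsep hx hy hxy; omega
    · obtain ⟨v, hv⟩ := hecc x
      exact hconn.card_mul_le_card_closedBall hδ (G.dist_comm ▸ hv.le)
  obtain ⟨a, ha⟩ := G.exists_isBurningSeq_card_add X _ hXcov
  refine ⟨_, a, ha, Nat.add_six_mul_div_twelve_add_two_le hs2 ?_⟩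
  rw [← hk]
  nlinarith
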